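/- Let m and n be distinct positive integers, let s be a nonempty finite sequence of positive integers, let k > 0, and let t be a sequence in {m, n}^k. Then C_{m,n}(s^r, t) = t, where r = 2^{⌈k/2⌉} and s^r denotes the concatenation of r copies of s. Consequently, the orbit of t under the bijection t ↦ C_{m,n}(s, t) on {m, n}^k has length dividing 2^{⌈k/2⌉}, so in particular at most 2^{⌈k/2⌉}. -/

import Mathlib

/-- `expand1 m n x s` : the expansion `E_{m,n}(s, x)` of the finite sequence `s` with the
single starting point `x ∈ {m, n}`: the unique sequence with values in `{m, n}`, first term
`x`, and run-lengths `s`. -/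
def expand1 (m n : ℕ) : ℕ → List ℕ → List ℕ
  | _, [] => []
  | x, a :: l => List.replicate a x ++ expand1 m n (m + n - x) l

/-- `expand m n s t` : the expansion `E_{m,n}(s, t)` of the finite sequence `s` with the
finite sequence of starting points `t` (values in `{m, n}`), defined by
`E_{m,n}(s, t₁ t') = E_{m,n}(E_{m,n}(s, t₁), t')`. -/
def expand (m n : ℕ) : List ℕ → List ℕ → List ℕ
  | s, [] => s
  | s, x :: t => expand m n (expand1 m n x s) t

/-- `torsion m n s t` : the torsion `C_{m,n}(s, t)`, the sequence of the same length as `t`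
whose `k`-th term equals `m + n` minus the last term of `E_{m,n}(s, t⁽ᵏ⁾)`, where `t⁽ᵏ⁾`
consists of the first `k` terms of `t`. -/
def torsion (m n : ℕ) (s t : List ℕ) : List ℕ :=
  (List.range t.length).map fun k => m + n - (expand m n s (t.take (k + 1))).getLastD 0

/-!
Write `x̄ = m + n - x` for the other letter. Expanding `u` along `x` gives its runs the letters
`x, x̄, x, …`, so `E(a ++ b, x) = E(a, x) ++ E(b, y)` with `y` the letter `x` flipped `|a|`
times, and the first letter of `C(u, x t')` is `x` flipped `|u|` times. Hence
`C(a ++ b, t) = C(b, C(a, t))`, so `C(s^r, ·)` is the `r`-th iterate of `C(s, ·)`. If `|u|` is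
even, then `E(u^p, x) = E(u, x)^p` and `C(u^p, x t') = x C(E(u, x)^p, t')`. Since
`s^(2^(c+1)) = (s s)^(2^c)`, where `s s` and `E(s s, x)` both have even length, halving the
exponent fixes two letters of `t`; so `C(s^(2^c), t) = t` as soon as `|t| ≤ 2c`.
-/
def flipLetter (m n x : ℕ) : ℕ := m + n - x

theorem List.flatten_replicate_ne_nil {α : Type*} {p : ℕ} (hp : p ≠ 0) {w : List α}
    (hw : w ≠ []) : (List.replicate p w).flatten ≠ [] := by
  simp [hp, hw]

theorem List.flatten_replicate_mul {α : Type*} (p q : ℕ) (w : List α) :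
    (List.replicate (p * q) w).flatten =
      (List.replicate p (List.replicate q w).flatten).flatten := by
  rw [← List.flatten_replicate_replicate, List.flatten_flatten, List.map_replicate]

section

variable {m n : ℕ}

theorem flipLetter_flipLetter {x : ℕ} (hx : x ≤ m + n) :
    flipLetter m n (flipLetter m n x) = x := by
  unfold flipLetter; omega

theorem iterate_flipLetter_of_even {x k : ℕ} (hx : x ≤ m + n) (hk : Even k) :
    (flipLetter m n)^[k] x = x := by
  obtain ⟨j, rfl⟩ := hk
  rw [← two_mul, Function.iterate_mul]
  exact Function.iterate_fixed (flipLetter_flipLetter hx) j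

theorem flipLetter_mem {x : ℕ} (hx : x = m ∨ x = n) :
    flipLetter m n x = m ∨ flipLetter m n x = n := by
  unfold flipLetter; omega

theorem iterate_flipLetter_mem {x : ℕ} (hx : x = m ∨ x = n) (k : ℕ) :
    (flipLetter m n)^[k] x = m ∨ (flipLetter m n)^[k] x = n := by
  induction k with
  | zero => exact hx
  | succ k ih => rw [Function.iterate_succ_apply']; exact flipLetter_mem ih

theorem expand1_cons (x a : ℕ) (l : List ℕ) :
    expand1 m n x (a :: l) = List.replicate a x ++ expand1 m n (flipLetter m n x) l := rfl

theorem expand1_append (x : ℕ) (a b : List ℕ) :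
    expand1 m n x (a ++ b) =
      expand1 m n x a ++ expand1 m n ((flipLetter m n)^[a.length] x) b := by
  induction a generalizing x with
  | nil => rfl
  | cons c a ih =>
    rw [List.cons_append, expand1_cons, expand1_cons, ih, List.append_assoc, List.length_cons,
      Function.iterate_succ_apply]

theorem length_expand1 (x : ℕ) (w : List ℕ) : (expand1 m n x w).length = w.sum := by
  induction w generalizing x with
  | nil => rfl
  | cons a l ih => simp [expand1_cons, ih]

theorem mem_expand1 {x y : ℕ} {w : List ℕ} (hx : x = m ∨ x = n) (hy : y ∈ expand1 m n x w) :
    y = m ∨ y = n := by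
  induction w generalizing x with
  | nil => cases hy
  | cons a l ih =>
    rw [expand1_cons, List.mem_append] at hy
    rcases hy with hy | hy
    · rw [List.eq_of_mem_replicate hy]; exact hx
    · exact ih (flipLetter_mem hx) hy

theorem pos_of_mem_expand1 (hm : 0 < m) (hn : 0 < n) {x y : ℕ} {w : List ℕ}
    (hx : x = m ∨ x = n) (hy : y ∈ expand1 m n x w) : 0 < y := by
  rcases mem_expand1 hx hy with rfl | rfl <;> assumption

theorem expand1_ne_nil (x : ℕ) {w : List ℕ} (hw : w ≠ []) (hpos : ∀ a ∈ w, 0 < a) :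
    expand1 m n x w ≠ [] := by
  obtain ⟨a, l, rfl⟩ := List.exists_cons_of_ne_nil hw
  simp [expand1_cons, (hpos a List.mem_cons_self).ne']

theorem getLastD_expand1 (x d : ℕ) {w : List ℕ} (hw : w ≠ []) (hpos : ∀ a ∈ w, 0 < a) :
    (expand1 m n x w).getLastD d = (flipLetter m n)^[w.length - 1] x := by
  obtain ⟨init, a, rfl⟩ := (List.eq_nil_or_concat w).resolve_left hw
  have ha : a ≠ 0 := (hpos a (by simp)).ne'
  simp [expand1_append, expand1, List.getLast?_replicate, ha]

theorem torsion_cons (u : List ℕ) (x : ℕ) (t : List ℕ) :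
    torsion m n u (x :: t) =
      (m + n - (expand1 m n x u).getLastD 0) :: torsion m n (expand1 m n x u) t := by
  unfold torsion
  rw [List.length_cons, List.range_succ_eq_map, List.map_cons, List.map_map]
  rfl

theorem torsion_cons_of_ne_nil (x : ℕ) (t : List ℕ) {u : List ℕ} (hu : u ≠ [])
    (hpos : ∀ a ∈ u, 0 < a) :
    torsion m n u (x :: t) =
      (flipLetter m n)^[u.length] x :: torsion m n (expand1 m n x u) t := by
  obtain ⟨k, hk⟩ := Nat.exists_eq_succ_of_ne_zero (List.length_pos_iff.2 hu).ne'
  rw [torsion_cons, getLastD_expand1 x 0 hu hpos, hk, Function.iterate_succ_apply',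
    Nat.succ_sub_one]
  rfl

theorem torsion_append (hm : 0 < m) (hn : 0 < n) {a b : List ℕ} (ha : a ≠ [])
    (hapos : ∀ x ∈ a, 0 < x) (hb : b ≠ []) (hbpos : ∀ x ∈ b, 0 < x) {t : List ℕ}
    (ht : ∀ x ∈ t, x = m ∨ x = n) :
    torsion m n (a ++ b) t = torsion m n b (torsion m n a t) := by
  induction t generalizing a b with
  | nil => rfl
  | cons x t ih =>
    have hx : x = m ∨ x = n := ht x List.mem_cons_self
    have hy := iterate_flipLetter_mem hx a.length
    rw [torsion_cons_of_ne_nil x t (by simp [ha]) (List.forall_mem_append.2 ⟨hapos, hbpos⟩),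
      torsion_cons_of_ne_nil x t ha hapos, torsion_cons_of_ne_nil _ _ hb hbpos, expand1_append,
      List.length_append, add_comm, Function.iterate_add_apply,
      ih (expand1_ne_nil x ha hapos) (fun _ => pos_of_mem_expand1 hm hn hx)
        (expand1_ne_nil _ hb hbpos) (fun _ => pos_of_mem_expand1 hm hn hy)
        (fun y hy => ht y (List.mem_cons_of_mem x hy))]

theorem pos_of_mem_flatten_replicate {p : ℕ} {w : List ℕ} (hpos : ∀ a ∈ w, 0 < a) :
    ∀ a ∈ (List.replicate p w).flatten, 0 < a := by
  simp only [List.mem_flatten, List.mem_replicate]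
  rintro a ⟨_, ⟨_, rfl⟩, ha⟩
  exact hpos a ha

theorem torsion_flatten_replicate (hm : 0 < m) (hn : 0 < n) {s : List ℕ} (hs : s ≠ [])
    (hspos : ∀ a ∈ s, 0 < a) {r : ℕ} (hr : 0 < r) {t : List ℕ}
    (ht : ∀ x ∈ t, x = m ∨ x = n) :
    torsion m n (List.replicate r s).flatten t = (torsion m n s)^[r] t := by
  induction r, hr using Nat.le_induction with
  | base => simp
  | succ r hr ih =>
    rw [List.replicate_succ', List.flatten_append, List.flatten_singleton,
      torsion_append hm hn (List.flatten_replicate_ne_nil (by omega) hs)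
        (pos_of_mem_flatten_replicate hspos) hs hspos ht, ih, Function.iterate_succ_apply']

theorem expand1_flatten_replicate {x : ℕ} (hx : x ≤ m + n) {w : List ℕ} (hw : Even w.length)
    (p : ℕ) :
    expand1 m n x (List.replicate p w).flatten = (List.replicate p (expand1 m n x w)).flatten := by
  induction p with
  | zero => rfl
  | succ p ih =>
    rw [List.replicate_succ, List.flatten_cons, expand1_append, iterate_flipLetter_of_even hx hw,
      ih, List.replicate_succ, List.flatten_cons]

theorem torsion_flatten_replicate_cons {x : ℕ} (hx : x ≤ m + n) (t : List ℕ) {w : List ℕ}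
    (hw : w ≠ []) (hpos : ∀ a ∈ w, 0 < a) (hev : Even w.length) {p : ℕ} (hp : p ≠ 0) :
    torsion m n (List.replicate p w).flatten (x :: t) =
      x :: torsion m n (List.replicate p (expand1 m n x w)).flatten t := by
  rw [torsion_cons_of_ne_nil x t (List.flatten_replicate_ne_nil hp hw)
      (pos_of_mem_flatten_replicate hpos), expand1_flatten_replicate hx hev,
    iterate_flipLetter_of_even hx (by simpa using hev.mul_left p)]

theorem torsion_flatten_replicate_two_pow (hm : 0 < m) (hn : 0 < n) {c : ℕ} {w : List ℕ}
    (hw : w ≠ []) (hpos : ∀ a ∈ w, 0 < a) {t : List ℕ} (ht : ∀ x ∈ t, x = m ∨ x = n)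
    (hlen : t.length ≤ 2 * c) :
    torsion m n (List.replicate (2 ^ c) w).flatten t = t := by
  induction c generalizing w t with
  | zero =>
    obtain rfl : t = [] := List.length_eq_zero_iff.1 (by omega)
    rfl
  | succ c ih =>
    set ww := (List.replicate 2 w).flatten
    have hww : ww ≠ [] := List.flatten_replicate_ne_nil two_ne_zero hw
    have hwwpos : ∀ a ∈ ww, 0 < a := pos_of_mem_flatten_replicate hpos
    have hwwev : Even ww.length := by simp [ww]
    have hp : 2 ^ c ≠ 0 := by positivity
    have hle {x : ℕ} (hx : x = m ∨ x = n) : x ≤ m + n := by omega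
    rw [pow_succ, List.flatten_replicate_mul]
    rcases t with _ | ⟨x, _ | ⟨y, t⟩⟩
    · rfl
    · rw [torsion_flatten_replicate_cons (hle (ht x (by simp))) [] hww hwwpos hwwev hp]
      rfl
    · have hx : x = m ∨ x = n := ht x (by simp)
      have hy : y = m ∨ y = n := ht y (by simp)
      set v := expand1 m n x ww
      have hv : v ≠ [] := expand1_ne_nil x hww hwwpos
      have hvpos : ∀ a ∈ v, 0 < a := fun _ => pos_of_mem_expand1 hm hn hx
      have hvev : Even v.length := by simp [v, ww, length_expand1]
      rw [torsion_flatten_replicate_cons (hle hx) _ hww hwwpos hwwev hp,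
        torsion_flatten_replicate_cons (hle hy) _ hv hvpos hvev hp,
        ih (expand1_ne_nil y hv hvpos) (fun _ => pos_of_mem_expand1 hm hn hy)
          (fun z hz => ht z (by simp [hz])) (by simp at hlen; omega)]

end

theorem torsion_orbit_length_le_general (m n : ℕ) (hm : 0 < m) (hn : 0 < n)
    (s : List ℕ) (hs : s ≠ []) (hsp : ∀ a ∈ s, 0 < a) (k : ℕ)
    (t : List ℕ) (htl : t.length = k) (htv : ∀ a ∈ t, a = m ∨ a = n) :
    torsion m n (List.replicate (2 ^ ((k + 1) / 2)) s).flatten t = t ∧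
    Function.minimalPeriod (torsion m n s) t ∣ 2 ^ ((k + 1) / 2) ∧
    Function.minimalPeriod (torsion m n s) t ≤ 2 ^ ((k + 1) / 2) := by
  have hr : 0 < 2 ^ ((k + 1) / 2) := by positivity
  have hfix := torsion_flatten_replicate_two_pow (c := (k + 1) / 2) hm hn hs hsp htv (by omega)
  have hper : Function.IsPeriodicPt (torsion m n s) (2 ^ ((k + 1) / 2)) t := by
    rwa [Function.IsPeriodicPt, Function.IsFixedPt,
      ← torsion_flatten_replicate hm hn hs hsp hr htv]
  exact ⟨hfix, hper.minimalPeriod_dvd, hper.minimalPeriod_le hr⟩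

/-- For `t ∈ {m, n}^k` and `r = 2^⌈k/2⌉`, `C_{m,n}(s^r, t) = t`; consequently the orbit
of `t` under `t ↦ C_{m,n}(s, t)` has length dividing `2^⌈k/2⌉`, in particular at most
`2^⌈k/2⌉`. -/
theorem torsion_orbit_length_le (m n : ℕ) (hm : 0 < m) (hn : 0 < n) (hmn : m ≠ n)
    (s : List ℕ) (hs : s ≠ []) (hsp : ∀ a ∈ s, 0 < a) (k : ℕ) (hk : 0 < k)
    (t : List ℕ) (htl : t.length = k) (htv : ∀ a ∈ t, a = m ∨ a = n) :
    torsion m n (List.replicate (2 ^ ((k + 1) / 2)) s).flatten t = t ∧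
    Function.minimalPeriod (torsion m n s) t ∣ 2 ^ ((k + 1) / 2) ∧
    Function.minimalPeriod (torsion m n s) t ≤ 2 ^ ((k + 1) / 2) :=
  torsion_orbit_length_le_general m n hm hn s hs hsp k t htl htv
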